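/- Let S be a numerical semigroup and f an automorphism of P(S). If X ∈ P(S) has exactly two elements, then f(X) = X. -/

import Mathlib

open Pointwise

/-- The power semigroup `P(S)`: finite nonempty subsets of `S`. -/
def PS (S : Set ℕ) : Set (Finset ℕ) := {X | X.Nonempty ∧ (X : Set ℕ) ⊆ S}

/-- `f` is an automorphism of the power semigroup `P(S)`:
an additive bijection of `P(S)` (setwise addition). -/
def IsPowerAut (S : Set ℕ) (f : Finset ℕ → Finset ℕ) : Prop :=
  (∀ X ∈ PS S, f X ∈ PS S) ∧
  (∀ X ∈ PS S, ∀ Y ∈ PS S, f X = f Y → X = Y) ∧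
  (∀ Y ∈ PS S, ∃ X ∈ PS S, f X = Y) ∧
  (∀ X ∈ PS S, ∀ Y ∈ PS S, f (X + Y) = f X + f Y)

/-- `S` is a numerical semigroup: a subsemigroup of `(ℕ, +)` with finite complement. -/
def IsNumSgp (S : Set ℕ) : Prop :=
  (∀ a ∈ S, ∀ b ∈ S, a + b ∈ S) ∧ (Sᶜ).Finite

/-- `k` is the critical element of `S`: the least `k` with `[k, ∞) ⊆ S`. -/
def IsCritical (S : Set ℕ) (k : ℕ) : Prop :=
  (∀ n, k ≤ n → n ∈ S) ∧ ∀ j, (∀ n, j ≤ n → n ∈ S) → k ≤ j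

/-!
Singletons are exactly the cancellative elements of `P(S)`, so `f` restricts to an additive
bijection of `S`, which must be the identity. Translating by the (fixed) singletons and summing a
set with itself then shows that `f` preserves minima. A two-element set `X` is singled out by the
equation `X + D = X + X + X` having at most two solutions `D`, so `f {a, b} = {a, c}`.
Finally, for `[K, ∞) ⊆ S`, intervals in `[K, ∞)` are sums of pairs `{x, x + 1}`, so `f` maps them
to progressions of a common difference `e`; comparing `{a, b} + [K, K + d) = {a} + [K, K + 2d)`
with its image forces first `e = 1` and then `c = b`.
-/

section Sumsets

theorem singleton_add_left_cancel {α : Type*} [Add α] [IsLeftCancelAdd α] [DecidableEq α] {a : α}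
    {B C : Finset α} (h : ({a} : Finset α) + B = {a} + C) : B = C := by
  simp only [Finset.singleton_add, Finset.vadd_finset_def, vadd_eq_add] at h
  exact Finset.image_injective (add_right_injective a) h

theorem singleton_add_image_tsub {s : ℕ} {W : Finset ℕ} (hs : ∀ w ∈ W, s ≤ w) :
    ({s} : Finset ℕ) + W.image (· - s) = W := by
  ext v
  simp only [Finset.singleton_add, Finset.mem_vadd_finset, Finset.mem_image, vadd_eq_add]
  constructor
  · rintro ⟨_, ⟨w, hw, rfl⟩, rfl⟩
    rwa [Nat.add_sub_cancel' (hs w hw)]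
  · exact fun hv => ⟨v - s, ⟨v, hv, rfl⟩, Nat.add_sub_cancel' (hs v hv)⟩

/-- A triple sum whose three pair sums all equal `c` has all three summands equal, so removing a
sum `c` that is not a double from `Y + Y` does not shrink `Y + (Y + Y)`. -/
theorem add_erase_add_self {α : Type*} [AddCancelCommMonoid α] [DecidableEq α] {Y : Finset α}
    {c : α} (hc : ∀ y ∈ Y, y + y ≠ c) : Y + (Y + Y).erase c = Y + Y + Y := by
  refine subset_antisymm ?_ ?_
  · rw [add_assoc]
    exact Finset.add_subset_add_left (Finset.erase_subset _ _)
  intro v hv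
  obtain ⟨w, hw, y₃, hy₃, rfl⟩ := Finset.mem_add.1 hv
  obtain ⟨y₁, hy₁, y₂, hy₂, rfl⟩ := Finset.mem_add.1 hw
  have mem : ∀ y ∈ Y, ∀ z ∈ Y, ∀ z' ∈ Y, z + z' ≠ c → y + (z + z') ∈ Y + (Y + Y).erase c :=
    fun y hy z hz z' hz' h =>
      Finset.add_mem_add hy (Finset.mem_erase.2 ⟨h, Finset.add_mem_add hz hz'⟩)
  by_cases h₂₃ : y₂ + y₃ = c
  swap
  · rw [add_assoc]
    exact mem y₁ hy₁ y₂ hy₂ y₃ hy₃ h₂₃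
  by_cases h₁₃ : y₁ + y₃ = c
  swap
  · rw [add_right_comm, add_comm (y₁ + y₃) y₂]
    exact mem y₂ hy₂ y₁ hy₁ y₃ hy₃ h₁₃
  have h₁₂ : y₁ = y₂ := add_right_cancel (h₁₃.trans h₂₃.symm)
  rw [add_comm (y₁ + y₂) y₃]
  exact mem y₃ hy₃ y₁ hy₁ y₂ hy₂ (h₁₂ ▸ hc y₁ hy₁)

theorem exists_mem_add_add_self_ne {Y : Finset ℕ} {a b : ℕ} (ha : a ∈ Y) (hb : b ∈ Y)
    (hab : a < b) : ∃ c ∈ Y + Y, a + a < c ∧ c < b + b ∧ ∀ y ∈ Y, y + y ≠ c := by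
  have hbf : b ∈ Y.filter (a < ·) := Finset.mem_filter.2 ⟨hb, hab⟩
  set s := (Y.filter (a < ·)).min' ⟨b, hbf⟩
  obtain ⟨hsY, has⟩ := Finset.mem_filter.1 (Finset.min'_mem _ ⟨b, hbf⟩)
  have hsb : s ≤ b := Finset.min'_le _ _ hbf
  refine ⟨a + s, Finset.add_mem_add ha hsY, by omega, by omega, fun y hy => ?_⟩
  rcases le_or_gt y a with hya | hay
  · omega
  · have : s ≤ y := Finset.min'_le _ _ (Finset.mem_filter.2 ⟨hy, hay⟩)
    omega

theorem exists_erase_add_eq_of_two_lt_card {Y : Finset ℕ} (hY : 2 < Y.card) :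
    ∃ c₁ ∈ Y + Y, ∃ c₂ ∈ Y + Y, c₁ ≠ c₂ ∧
      Y + (Y + Y).erase c₁ = Y + Y + Y ∧ Y + (Y + Y).erase c₂ = Y + Y + Y := by
  obtain ⟨u, hu, w, hw, v, hv, huw, hwv⟩ : ∃ u ∈ Y, ∃ w ∈ Y, ∃ v ∈ Y, u < w ∧ w < v := by
    let e := Y.orderEmbOfFin rfl
    exact ⟨e ⟨0, by omega⟩, Y.orderEmbOfFin_mem rfl _, e ⟨1, by omega⟩, Y.orderEmbOfFin_mem rfl _,
      e ⟨2, by omega⟩, Y.orderEmbOfFin_mem rfl _, e.strictMono (by simp [Fin.lt_def]),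
      e.strictMono (by simp [Fin.lt_def])⟩
  obtain ⟨c₁, hc₁, -, hc₁w, hc₁Y⟩ := exists_mem_add_add_self_ne hu hw huw
  obtain ⟨c₂, hc₂, hwc₂, -, hc₂Y⟩ := exists_mem_add_add_self_ne hw hv hwv
  exact ⟨c₁, hc₁, c₂, hc₂, by omega, add_erase_add_self hc₁Y, add_erase_add_self hc₂Y⟩

theorem mem_pair_add_pair_add_pair {a b v : ℕ} : v ∈ ({a, b} : Finset ℕ) + {a, b} + {a, b} ↔
    v = a + a + a ∨ v = a + a + b ∨ v = a + b + b ∨ v = b + b + b := by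
  simp only [Finset.mem_add, Finset.mem_insert, Finset.mem_singleton]
  constructor
  · rintro ⟨_, ⟨x, hx, y, hy, rfl⟩, z, hz, rfl⟩
    rcases hx with rfl | rfl <;> rcases hy with rfl | rfl <;> rcases hz with rfl | rfl <;> omega
  · rintro (rfl | rfl | rfl | rfl)
    · exact ⟨_, ⟨a, by simp, a, by simp, rfl⟩, a, by simp, rfl⟩
    · exact ⟨_, ⟨a, by simp, a, by simp, rfl⟩, b, by simp, rfl⟩
    · exact ⟨_, ⟨a, by simp, b, by simp, rfl⟩, b, by simp, rfl⟩
    · exact ⟨_, ⟨b, by simp, b, by simp, rfl⟩, b, by simp, rfl⟩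

theorem eq_or_eq_of_pair_add_eq {a b : ℕ} (hab : a < b) {D : Finset ℕ}
    (h : {a, b} + D = ({a, b} : Finset ℕ) + {a, b} + {a, b}) :
    D = {a + a, a + b, b + b} ∨ D = {a + a, b + b} := by
  have hD : ∀ t ∈ D, t = a + a ∨ t = a + b ∨ t = b + b := by
    intro t ht
    have ha : a + t ∈ ({a, b} : Finset ℕ) + D := Finset.add_mem_add (by simp) ht
    have hb : b + t ∈ ({a, b} : Finset ℕ) + D := Finset.add_mem_add (by simp) ht
    rw [h, mem_pair_add_pair_add_pair] at ha hb
    omega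
  have hcorner : ∀ x, x = a ∨ x = b → x + x ∈ D := by
    intro x hx
    have hx3 : x + x + x ∈ ({a, b} : Finset ℕ) + D := by
      rw [h, mem_pair_add_pair_add_pair]
      omega
    obtain ⟨y, hy, t, ht, hyt⟩ := Finset.mem_add.1 hx3
    rw [Finset.mem_insert, Finset.mem_singleton] at hy
    obtain rfl : t = x + x := by have := hD t ht; omega
    exact ht
  by_cases hmid : a + b ∈ D
  · left
    ext t
    simp only [Finset.mem_insert, Finset.mem_singleton]
    refine ⟨hD t, ?_⟩
    rintro (rfl | rfl | rfl)
    exacts [hcorner a (Or.inl rfl), hmid, hcorner b (Or.inr rfl)]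
  · right
    ext t
    simp only [Finset.mem_insert, Finset.mem_singleton]
    refine ⟨fun ht => ?_, ?_⟩
    · rcases hD t ht with rfl | rfl | rfl
      exacts [Or.inl rfl, absurd ht hmid, Or.inr rfl]
    rintro (rfl | rfl)
    exacts [hcorner a (Or.inl rfl), hcorner b (Or.inr rfl)]

theorem exists_eq_or_eq_of_add_eq {X : Finset ℕ} (hX : X.card = 2) :
    ∃ E₁ E₂ : Finset ℕ, ∀ D, X + D = X + X + X → D = E₁ ∨ D = E₂ := by
  obtain ⟨a, b, hab, rfl⟩ := Finset.card_eq_two.1 hX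
  rcases hab.lt_or_gt with h | h
  · exact ⟨_, _, fun D hD => eq_or_eq_of_pair_add_eq h hD⟩
  · rw [Finset.pair_comm]
    exact ⟨_, _, fun D hD => eq_or_eq_of_pair_add_eq h hD⟩

def arithProg (x s n : ℕ) : Finset ℕ := (Finset.range n).image (fun j => x + j * s)

theorem mem_arithProg {x s n v : ℕ} : v ∈ arithProg x s n ↔ ∃ j < n, x + j * s = v := by
  simp [arithProg]

theorem arithProg_one (x s : ℕ) : arithProg x s 1 = {x} := by
  simp [arithProg]

theorem pair_add_arithProg {a k x s m : ℕ} (hk : k ≤ m) :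
    ({a, a + k * s} : Finset ℕ) + arithProg x s m = {a} + arithProg x s (m + k) := by
  ext v
  simp only [Finset.mem_add, Finset.mem_insert, Finset.mem_singleton, mem_arithProg]
  constructor
  · rintro ⟨y, hy, _, ⟨j, hj, rfl⟩, rfl⟩
    rcases hy with rfl | rfl
    · exact ⟨y, rfl, _, ⟨j, by omega, rfl⟩, rfl⟩
    · exact ⟨a, rfl, _, ⟨j + k, by omega, rfl⟩, by ring⟩
  · rintro ⟨y, hy, _, ⟨j, hj, rfl⟩, rfl⟩
    rcases lt_or_ge j m with hjm | hjm
    · exact ⟨y, Or.inl hy, _, ⟨j, hjm, rfl⟩, rfl⟩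
    · obtain ⟨i, rfl⟩ := Nat.exists_eq_add_of_le' (hk.trans hjm)
      exact ⟨y + k * s, Or.inr (by rw [hy]), _, ⟨i, by omega, rfl⟩, by ring⟩

theorem eq_of_pair_add_arithProg {a b x s n : ℕ} (hab : a < b) (hn : 0 < n)
    (h : ({a, b} : Finset ℕ) + arithProg x s n = {a} + arithProg x s (n + n)) :
    b = a + n * s := by
  obtain ⟨m, rfl⟩ : ∃ m, n = m + 1 := ⟨n - 1, by omega⟩
  have htop : b + (x + m * s) ∈ ({a} : Finset ℕ) + arithProg x s (m + 1 + (m + 1)) := by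
    rw [← h]
    exact Finset.add_mem_add (by simp) (mem_arithProg.2 ⟨m, by omega, rfl⟩)
  have htop' : a + (x + (m + m + 1) * s) ∈ ({a, b} : Finset ℕ) + arithProg x s (m + 1) := by
    rw [h]
    exact Finset.add_mem_add (by simp) (mem_arithProg.2 ⟨m + m + 1, by omega, rfl⟩)
  simp only [Finset.mem_add, Finset.mem_insert, Finset.mem_singleton, mem_arithProg] at htop htop'
  obtain ⟨_, rfl, _, ⟨j, hj, rfl⟩, hj'⟩ := htop
  obtain ⟨y, hy, _, ⟨i, hi, rfl⟩, hi'⟩ := htop'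
  have hjs : j * s ≤ (m + m + 1) * s := Nat.mul_le_mul_right s (by omega)
  have his : i * s ≤ m * s := Nat.mul_le_mul_right s (by omega)
  rcases hy with rfl | rfl <;> nlinarith

end Sumsets

/-- Additivity gives `b * φ a = a * φ b`; as `m = φ a'` with `a' ≥ m` and `φ m ≥ m`, the identity
`m * m = a' * φ m` forces `φ m = m`. -/
theorem apply_eq_self_of_additive {S : Set ℕ} (hS : ∀ a ∈ S, ∀ b ∈ S, a + b ∈ S) {m : ℕ}
    (hmS : m ∈ S) (hm : 0 < m) (hmin : ∀ n ∈ S, 0 < n → m ≤ n) {φ : ℕ → ℕ}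
    (hφS : ∀ a ∈ S, φ a ∈ S) (hφ : ∀ a ∈ S, ∀ b ∈ S, φ (a + b) = φ a + φ b)
    (hφm : ∃ a ∈ S, φ a = m) {a : ℕ} (ha : a ∈ S) : φ a = a := by
  have hφ0 : 0 ∈ S → φ 0 = 0 := fun h0 => by simpa using hφ 0 h0 0 h0
  have hmul : ∀ a ∈ S, ∀ n, (n + 1) * a ∈ S ∧ φ ((n + 1) * a) = (n + 1) * φ a := by
    intro a ha n
    induction n with
    | zero => simpa using ha
    | succ n ih =>
      rw [add_mul _ 1, one_mul, hφ _ ih.1 _ ha, ih.2]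
      exact ⟨hS _ ih.1 _ ha, by ring⟩
  have hcross : ∀ a ∈ S, ∀ b ∈ S, 0 < a → 0 < b → b * φ a = a * φ b := by
    intro a ha b hb ha0 hb0
    obtain ⟨i, rfl⟩ : ∃ i, a = i + 1 := ⟨a - 1, by omega⟩
    obtain ⟨j, rfl⟩ : ∃ j, b = j + 1 := ⟨b - 1, by omega⟩
    rw [← (hmul _ ha j).2, ← (hmul _ hb i).2, mul_comm]
  obtain ⟨a', ha'S, ha'⟩ := hφm
  have ha'0 : 0 < a' := Nat.pos_of_ne_zero fun h => by
    subst h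
    rw [hφ0 ha'S] at ha'
    omega
  have hmm := hcross a' ha'S m hmS ha'0 hm
  rw [ha'] at hmm
  have hφm0 : 0 < φ m := Nat.pos_of_ne_zero fun h => by
    rw [h, mul_zero] at hmm
    exact (Nat.mul_pos hm hm).ne' hmm
  have hφmm : φ m = m := by
    have := hmin _ ha'S ha'0
    have := hmin _ (hφS m hmS) hφm0
    nlinarith
  rcases Nat.eq_zero_or_pos a with rfl | ha0
  · exact hφ0 ha
  · have := hcross a ha m hmS ha0 hm
    rw [hφmm, mul_comm a m] at this
    exact Nat.eq_of_mul_eq_mul_left hm this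

section PowerSemigroup

variable {S : Set ℕ} {K : ℕ} {X Y : Finset ℕ}

theorem IsNumSgp.exists_forall_le_mem (hS : IsNumSgp S) : ∃ K, ∀ n, K ≤ n → n ∈ S := by
  obtain ⟨M, hM⟩ := hS.2.bddAbove
  exact ⟨M + 1, fun n hn => by_contra fun h => by have := hM h; omega⟩

theorem singleton_mem_PS {a : ℕ} (ha : a ∈ S) : {a} ∈ PS S :=
  ⟨Finset.singleton_nonempty a, by simpa using ha⟩

theorem add_mem_PS (hS : IsNumSgp S) (hX : X ∈ PS S) (hY : Y ∈ PS S) : X + Y ∈ PS S := by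
  refine ⟨hX.1.add hY.1, fun v hv => ?_⟩
  obtain ⟨x, hx, y, hy, rfl⟩ := Finset.mem_add.1 (Finset.mem_coe.1 hv)
  exact hS.1 x (hX.2 hx) y (hY.2 hy)

theorem mem_PS_of_subset (hY : Y ∈ PS S) (hX : X.Nonempty) (hXY : X ⊆ Y) : X ∈ PS S :=
  ⟨hX, (Finset.coe_subset.2 hXY).trans hY.2⟩

theorem mem_PS_of_forall_le (hK : ∀ n, K ≤ n → n ∈ S) (hX : X.Nonempty) (h : ∀ x ∈ X, K ≤ x) :
    X ∈ PS S :=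
  ⟨hX, fun x hx => hK x (h x hx)⟩

theorem arithProg_mem_PS (hK : ∀ n, K ≤ n → n ∈ S) {x s n : ℕ} (hx : K ≤ x) (hn : 0 < n) :
    arithProg x s n ∈ PS S := by
  refine mem_PS_of_forall_le hK ⟨x, mem_arithProg.2 ⟨0, hn, by simp⟩⟩ fun v hv => ?_
  obtain ⟨j, -, rfl⟩ := mem_arithProg.1 hv
  omega

def IsCancellative (S : Set ℕ) (X : Finset ℕ) : Prop :=
  ∀ B ∈ PS S, ∀ C ∈ PS S, X + B = X + C → B = C

/-- With `e = max X - min X`, the sets `[K, K + 2e]` and `[K, K + 2e] \ {K + e}` have the same sum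
with `X`: the missing sums `x + K + e` are recovered from `min X` or `max X`. -/
theorem not_isCancellative_of_one_lt_card (hK : ∀ n, K ≤ n → n ∈ S) (hX : 1 < X.card) :
    ¬ IsCancellative S X := by
  have hne : X.Nonempty := Finset.card_pos.1 (by omega)
  set a := X.min' hne
  set b := X.max' hne
  have hab : a < b := Finset.min'_lt_max'_of_card X hX
  set B := Finset.Icc K (K + 2 * (b - a))
  set C := B.erase (K + (b - a))
  have hmemC : ∀ t, K ≤ t → t ≤ K + 2 * (b - a) → t ≠ K + (b - a) → t ∈ C := fun t h₁ h₂ h₃ =>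
    Finset.mem_erase.2 ⟨h₃, Finset.mem_Icc.2 ⟨h₁, h₂⟩⟩
  have hB : B ∈ PS S :=
    mem_PS_of_forall_le hK ⟨K, by simp [B]⟩ fun t ht => (Finset.mem_Icc.1 ht).1
  have hC : C ∈ PS S :=
    mem_PS_of_subset hB ⟨K, hmemC K le_rfl (by omega) (by omega)⟩ (Finset.erase_subset _ _)
  intro hcancel
  suffices hBC : B = C from
    Finset.notMem_erase _ B (hBC ▸ Finset.mem_Icc.2 ⟨by omega, by omega⟩ : K + (b - a) ∈ C)
  refine hcancel B hB C hC (subset_antisymm ?_ (Finset.add_subset_add_left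
    (Finset.erase_subset _ _)))
  intro v hv
  obtain ⟨x, hx, t, ht, rfl⟩ := Finset.mem_add.1 hv
  have hax : a ≤ x := X.min'_le x hx
  have hxb : x ≤ b := X.le_max' x hx
  obtain ⟨htK, htK'⟩ := Finset.mem_Icc.1 ht
  by_cases hte : t = K + (b - a)
  · rcases hax.eq_or_lt with hxa | hxa
    · rw [show x + t = b + K by omega]
      exact Finset.add_mem_add (X.max'_mem hne) (hmemC K le_rfl (by omega) (by omega))
    · rw [show x + t = a + (t + (x - a)) by omega]
      exact Finset.add_mem_add (X.min'_mem hne) (hmemC _ (by omega) (by omega) (by omega))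
  · exact Finset.add_mem_add hx (hmemC t htK htK' hte)

theorem isCancellative_iff_card_eq_one (hS : IsNumSgp S) (hX : X ∈ PS S) :
    IsCancellative S X ↔ X.card = 1 := by
  obtain ⟨K, hK⟩ := hS.exists_forall_le_mem
  refine ⟨fun h => ?_, fun h => ?_⟩
  · have := hX.1.card_pos
    by_contra h1
    exact not_isCancellative_of_one_lt_card hK (by omega) h
  · obtain ⟨a, rfl⟩ := Finset.card_eq_one.1 h
    exact fun B _ C _ => singleton_add_left_cancel

namespace IsPowerAut

variable {f : Finset ℕ → Finset ℕ}

theorem map_mem (hf : IsPowerAut S f) (hX : X ∈ PS S) : f X ∈ PS S := hf.1 X hX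

theorem injOn (hf : IsPowerAut S f) : Set.InjOn f (PS S) := fun X hX Y hY => hf.2.1 X hX Y hY

theorem exists_eq (hf : IsPowerAut S f) (hY : Y ∈ PS S) : ∃ X ∈ PS S, f X = Y := hf.2.2.1 Y hY

theorem map_add (hf : IsPowerAut S f) (hX : X ∈ PS S) (hY : Y ∈ PS S) :
    f (X + Y) = f X + f Y :=
  hf.2.2.2 X hX Y hY

theorem exists_inverse (hS : IsNumSgp S) (hf : IsPowerAut S f) :
    ∃ g, IsPowerAut S g ∧ (∀ X ∈ PS S, g (f X) = X) ∧ ∀ X ∈ PS S, f (g X) = X := by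
  have hsurj : Set.SurjOn f (PS S) (PS S) := fun Y hY => hf.exists_eq hY
  have hgf := hf.injOn.leftInvOn_invFunOn
  have hfg := hsurj.rightInvOn_invFunOn
  have hg := hsurj.mapsTo_invFunOn
  refine ⟨Function.invFunOn f (PS S), ⟨fun X hX => hg hX, fun X hX Y hY h => ?_,
    fun X hX => ⟨f X, hf.map_mem hX, hgf hX⟩, fun X hX Y hY => ?_⟩, fun X hX => hgf hX,
    fun X hX => hfg hX⟩
  · rw [← hfg hX, ← hfg hY, h]
  · apply hf.injOn (hg (add_mem_PS hS hX hY)) (add_mem_PS hS (hg hX) (hg hY))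
    rw [hfg (add_mem_PS hS hX hY), hf.map_add (hg hX) (hg hY), hfg hX, hfg hY]

theorem isCancellative_map_iff (hS : IsNumSgp S) (hf : IsPowerAut S f) (hX : X ∈ PS S) :
    IsCancellative S (f X) ↔ IsCancellative S X := by
  refine ⟨fun h B hB C hC hBC => hf.injOn hB hC ?_, fun h B hB C hC hBC => ?_⟩
  · refine h _ (hf.map_mem hB) _ (hf.map_mem hC) ?_
    rw [← hf.map_add hX hB, ← hf.map_add hX hC, hBC]
  · obtain ⟨B', hB', rfl⟩ := hf.exists_eq hB
    obtain ⟨C', hC', rfl⟩ := hf.exists_eq hC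
    rw [h B' hB' C' hC' (hf.injOn (add_mem_PS hS hX hB') (add_mem_PS hS hX hC') (by
      rw [hf.map_add hX hB', hf.map_add hX hC', hBC]))]

theorem card_map_eq_one_iff (hS : IsNumSgp S) (hf : IsPowerAut S f) (hX : X ∈ PS S) :
    (f X).card = 1 ↔ X.card = 1 := by
  rw [← isCancellative_iff_card_eq_one hS (hf.map_mem hX), ← isCancellative_iff_card_eq_one hS hX,
    hf.isCancellative_map_iff hS hX]

theorem map_singleton (hS : IsNumSgp S) (hf : IsPowerAut S f) {a : ℕ} (ha : a ∈ S) :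
    f {a} = {a} := by
  classical
  have hsing : ∀ a ∈ S, ∃ b, f {a} = {b} := fun a ha => Finset.card_eq_one.1
    ((hf.card_map_eq_one_iff hS (singleton_mem_PS ha)).2 (Finset.card_singleton a))
  choose! φ hφ using hsing
  have hφS : ∀ a ∈ S, φ a ∈ S := fun a ha =>
    (hf.map_mem (singleton_mem_PS ha)).2 (by simp [hφ a ha])
  have hφadd : ∀ a ∈ S, ∀ b ∈ S, φ (a + b) = φ a + φ b := by
    intro a ha b hb
    apply Finset.singleton_injective
    rw [← hφ _ (hS.1 a ha b hb), ← Finset.singleton_add_singleton,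
      hf.map_add (singleton_mem_PS ha) (singleton_mem_PS hb), hφ a ha, hφ b hb,
      Finset.singleton_add_singleton]
  obtain ⟨K, hK⟩ := hS.exists_forall_le_mem
  have hpos : ∃ n, n ∈ S ∧ 0 < n := ⟨K + 1, hK _ (by omega), by omega⟩
  obtain ⟨hmS, hm⟩ := Nat.find_spec hpos
  have hφm : ∃ a ∈ S, φ a = Nat.find hpos := by
    obtain ⟨X, hX, hXm⟩ := hf.exists_eq (singleton_mem_PS hmS)
    obtain ⟨a, rfl⟩ := Finset.card_eq_one.1 ((hf.card_map_eq_one_iff hS hX).1 (by rw [hXm]; rfl))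
    have ha : a ∈ S := hX.2 (by simp)
    exact ⟨a, ha, Finset.singleton_injective ((hφ a ha).symm.trans hXm)⟩
  rw [hφ a ha, apply_eq_self_of_additive hS.1 hmS hm (fun n hn hn0 => Nat.find_min' hpos ⟨hn, hn0⟩)
    hφS hφadd hφm ha]

/-- Writing `V = {s} + (V - s)` and using that `f` fixes `{s}`. -/
theorem le_of_mem_map (hS : IsNumSgp S) (hf : IsPowerAut S f) (hK : ∀ n, K ≤ n → n ∈ S)
    {V : Finset ℕ} (hV : V ∈ PS S) {s : ℕ} (hsK : K ≤ s) (hs : ∀ v ∈ V, s + K ≤ v) {y : ℕ}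
    (hy : y ∈ f V) : s ≤ y := by
  have hsS : s ∈ S := hK s hsK
  have hZ : V.image (· - s) ∈ PS S := by
    refine mem_PS_of_forall_le hK (hV.1.image _) fun z hz => ?_
    obtain ⟨v, hv, rfl⟩ := Finset.mem_image.1 hz
    have := hs v hv
    omega
  rw [← singleton_add_image_tsub fun v hv => (hs v hv).trans' (Nat.le_add_right s K),
    hf.map_add (singleton_mem_PS hsS) hZ, hf.map_singleton hS hsS] at hy
  obtain ⟨_, hs', z, -, rfl⟩ := Finset.mem_add.1 hy
  rw [Finset.mem_singleton] at hs'
  omega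

/-- If some element of `f W` lay below `W`, summing `W` with itself would push the gap beyond the
bound of `le_of_mem_map`. -/
theorem exists_le_of_mem_map (hS : IsNumSgp S) (hf : IsPowerAut S f) {W : Finset ℕ}
    (hW : W ∈ PS S) {y : ℕ} (hy : y ∈ f W) : ∃ w ∈ W, w ≤ y := by
  obtain ⟨K, hK⟩ := hS.exists_forall_le_mem
  by_contra! hyW
  have gap : ∀ n, ∃ V ∈ PS S, ∃ z ∈ f V, ∀ v ∈ V, z + n ≤ v := by
    intro n
    induction n with
    | zero => exact ⟨W, hW, y, hy, fun v hv => (hyW v hv).le⟩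
    | succ n ih =>
      obtain ⟨V, hV, z, hz, hzV⟩ := ih
      refine ⟨V + W, add_mem_PS hS hV hW, z + y, ?_, fun v hv => ?_⟩
      · rw [hf.map_add hV hW]
        exact Finset.add_mem_add hz hy
      · obtain ⟨v₁, hv₁, w, hw, rfl⟩ := Finset.mem_add.1 hv
        have := hzV v₁ hv₁
        have := hyW w hw
        omega
  obtain ⟨V, hV, z, hz, hzV⟩ := gap (2 * K + 1)
  have := hf.le_of_mem_map hS hK hV (s := z + K + 1) (by omega)
    (fun v hv => by have := hzV v hv; omega) hz
  omega

theorem exists_mem_map_le (hS : IsNumSgp S) (hf : IsPowerAut S f) {W : Finset ℕ}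
    (hW : W ∈ PS S) {w : ℕ} (hw : w ∈ W) : ∃ y ∈ f W, y ≤ w := by
  obtain ⟨g, hg, hgf, -⟩ := hf.exists_inverse hS
  exact hg.exists_le_of_mem_map hS (hf.map_mem hW) (by rwa [hgf W hW])

/-- `f` matches the solutions `D` of `X + D = X + X + X` with those of the same equation for
`Y = f X`. There are at most two when `|X| = 2`, but at least three (`Y + Y` and two of its
erasures) if `|Y| ≥ 3`. -/
theorem card_map_eq_two (hS : IsNumSgp S) (hf : IsPowerAut S f) (hX : X ∈ PS S)
    (hX2 : X.card = 2) : (f X).card = 2 := by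
  set Y := f X
  have hY : Y ∈ PS S := hf.map_mem hX
  have hY1 : Y.card ≠ 1 := fun h => by
    have := (hf.card_map_eq_one_iff hS hX).1 h
    omega
  have hY0 := hY.1.card_pos
  by_contra hY2
  obtain ⟨c₁, hc₁, c₂, hc₂, hc, h₁, h₂⟩ := exists_erase_add_eq_of_two_lt_card (Y := Y) (by omega)
  obtain ⟨E₁, E₂, hE⟩ := exists_eq_or_eq_of_add_eq hX2
  obtain ⟨g, hg, -, hfg⟩ := hf.exists_inverse hS
  have hsol : ∀ B ∈ PS S, Y + B = Y + Y + Y → g B = E₁ ∨ g B = E₂ := by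
    intro B hB hYB
    have hXX := add_mem_PS hS hX hX
    refine hE _ (hf.injOn (add_mem_PS hS hX (hg.map_mem hB)) (add_mem_PS hS hXX hX) ?_)
    rw [hf.map_add hX (hg.map_mem hB), hfg B hB, hYB, hf.map_add hXX hX, hf.map_add hX hX]
  have hYY := add_mem_PS hS hY hY
  have hB₁ : (Y + Y).erase c₁ ∈ PS S :=
    mem_PS_of_subset hYY ⟨c₂, Finset.mem_erase.2 ⟨hc.symm, hc₂⟩⟩ (Finset.erase_subset _ _)
  have hB₂ : (Y + Y).erase c₂ ∈ PS S :=
    mem_PS_of_subset hYY ⟨c₁, Finset.mem_erase.2 ⟨hc, hc₁⟩⟩ (Finset.erase_subset _ _)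
  have hne₁ : Y + Y ≠ (Y + Y).erase c₁ := fun h => Finset.erase_eq_self.1 h.symm hc₁
  have hne₂ : Y + Y ≠ (Y + Y).erase c₂ := fun h => Finset.erase_eq_self.1 h.symm hc₂
  have hne₁₂ : (Y + Y).erase c₁ ≠ (Y + Y).erase c₂ := fun h =>
    hc (Finset.erase_injOn (Y + Y) hc₁ hc₂ h)
  rcases hsol _ hYY (add_assoc Y Y Y).symm with e₀ | e₀ <;> rcases hsol _ hB₁ h₁ with e₁ | e₁ <;>
    rcases hsol _ hB₂ h₂ with e₂ | e₂
  all_goals first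
    | exact hne₁ (hg.injOn hYY hB₁ (e₀.trans e₁.symm))
    | exact hne₂ (hg.injOn hYY hB₂ (e₀.trans e₂.symm))
    | exact hne₁₂ (hg.injOn hB₁ hB₂ (e₁.trans e₂.symm))

theorem map_pair (hS : IsNumSgp S) (hf : IsPowerAut S f) {a b : ℕ} (hab : a < b)
    (hX : {a, b} ∈ PS S) : ∃ c, a < c ∧ f {a, b} = {a, c} := by
  obtain ⟨p, q, hpq, hfX⟩ :=
    Finset.card_eq_two.1 (hf.card_map_eq_two hS hX (Finset.card_pair hab.ne))
  have hge : ∀ y ∈ f {a, b}, a ≤ y := fun y hy => by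
    obtain ⟨w, hw, hwy⟩ := hf.exists_le_of_mem_map hS hX hy
    simp only [Finset.mem_insert, Finset.mem_singleton] at hw
    omega
  obtain ⟨y, hy, hya⟩ := hf.exists_mem_map_le hS hX (Finset.mem_insert_self a {b})
  obtain rfl : y = a := le_antisymm hya (hge y hy)
  rw [hfX] at hge hy ⊢
  simp only [Finset.mem_insert, Finset.mem_singleton] at hy hge
  rcases hy with rfl | rfl
  · exact ⟨q, lt_of_le_of_ne (hge q (Or.inr rfl)) hpq, rfl⟩
  · exact ⟨p, lt_of_le_of_ne (hge p (Or.inl rfl)) hpq.symm, Finset.pair_comm _ _⟩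

theorem map_arithProg (hS : IsNumSgp S) (hf : IsPowerAut S f) (hK : ∀ n, K ≤ n → n ∈ S) {e : ℕ}
    (he : f {K, K + 1} = {K, K + e}) {x : ℕ} (hx : K ≤ x) {n : ℕ} (hn : 0 < n) :
    f (arithProg x 1 n) = arithProg x e n := by
  have hKS := hK K le_rfl
  have hP : {K, K + 1} ∈ PS S :=
    mem_PS_of_forall_le hK (Finset.insert_nonempty _ _) (by simp)
  induction n, hn using Nat.le_induction with
  | base => rw [arithProg_one, arithProg_one, hf.map_singleton hS (hK x hx)]
  | succ n hn ih =>
    have key := congrArg f (pair_add_arithProg (a := K) (k := 1) (x := x) (s := 1) hn)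
    have step := pair_add_arithProg (a := K) (k := 1) (x := x) (s := e) hn
    rw [one_mul] at key step
    rw [hf.map_add hP (arithProg_mem_PS hK hx (by omega)),
      hf.map_add (singleton_mem_PS hKS) (arithProg_mem_PS hK hx (by omega)), he, ih,
      hf.map_singleton hS hKS, step] at key
    exact (singleton_add_left_cancel key).symm

/-- With `f {K, K + 1} = {K, K + e}` and `f {K, K + d} = {K, K + 1}`, applying `f` to
`{K, K + d} + [K, K + d) = {K} + [K, K + 2d)` gives `d * e = 1`. -/
theorem map_pair_add_one (hS : IsNumSgp S) (hf : IsPowerAut S f) (hK : ∀ n, K ≤ n → n ∈ S) :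
    f {K, K + 1} = {K, K + 1} := by
  have hKS := hK K le_rfl
  have hP : {K, K + 1} ∈ PS S :=
    mem_PS_of_forall_le hK (Finset.insert_nonempty _ _) (by simp)
  obtain ⟨c, hKc, hc⟩ := hf.map_pair hS (lt_add_one K) hP
  obtain ⟨e, rfl⟩ := Nat.exists_eq_add_of_le hKc.le
  obtain ⟨g, hg, -, hfg⟩ := hf.exists_inverse hS
  obtain ⟨d, hKd, hd⟩ := hg.map_pair hS (lt_add_one K) hP
  have hfd : f {K, d} = {K, K + 1} := by rw [← hd, hfg _ hP]
  have hQ : {K, d} ∈ PS S := hd ▸ hg.map_mem hP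
  obtain ⟨d, rfl⟩ := Nat.exists_eq_add_of_lt hKd
  have key := congrArg f (pair_add_arithProg (a := K) (k := d + 1) (x := K) (s := 1) le_rfl)
  rw [mul_one, ← add_assoc, hf.map_add hQ (arithProg_mem_PS hK le_rfl (by omega)),
    hf.map_add (singleton_mem_PS hKS) (arithProg_mem_PS hK le_rfl (by omega)), hfd,
    hf.map_singleton hS hKS, hf.map_arithProg hS hK hc le_rfl (by omega),
    hf.map_arithProg hS hK hc le_rfl (by omega)] at key
  have hde : (d + 1) * e = 1 := by linarith [eq_of_pair_add_arithProg (lt_add_one K) (by omega) key]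
  rw [hc, Nat.eq_one_of_mul_eq_one_left hde]

theorem map_pair_eq_self (hS : IsNumSgp S) (hf : IsPowerAut S f) {a b : ℕ} (hab : a < b)
    (hX : {a, b} ∈ PS S) : f {a, b} = {a, b} := by
  obtain ⟨K, hK⟩ := hS.exists_forall_le_mem
  have hI : ∀ {n}, 0 < n → f (arithProg K 1 n) = arithProg K 1 n := fun hn =>
    hf.map_arithProg hS hK (hf.map_pair_add_one hS hK) le_rfl hn
  obtain ⟨c, hac, hc⟩ := hf.map_pair hS hab hX
  obtain ⟨d, rfl⟩ := Nat.exists_eq_add_of_lt hab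
  have key := congrArg f (pair_add_arithProg (a := a) (k := d + 1) (x := K) (s := 1) le_rfl)
  rw [mul_one, ← add_assoc, hf.map_add hX (arithProg_mem_PS hK le_rfl (by omega)),
    hf.map_add (singleton_mem_PS (hX.2 (by simp))) (arithProg_mem_PS hK le_rfl (by omega)),
    hc, hf.map_singleton hS (hX.2 (by simp)), hI (by omega), hI (by omega)] at key
  rw [hc, eq_of_pair_add_arithProg hac (by omega) key, mul_one, add_assoc]

end IsPowerAut

end PowerSemigroup

/-- An automorphism of `P(S)` fixes every two-element set. -/
theorem stmt6 (S : Set ℕ) (hS : IsNumSgp S) (f : Finset ℕ → Finset ℕ)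
    (hf : IsPowerAut S f) :
    ∀ X : Finset ℕ, (X : Set ℕ) ⊆ S → X.card = 2 → f X = X := by
  intro X hXS hX2
  obtain ⟨a, b, hab, rfl⟩ := Finset.card_eq_two.1 hX2
  have hX : {a, b} ∈ PS S := ⟨Finset.insert_nonempty _ _, hXS⟩
  rcases hab.lt_or_gt with h | h
  · exact hf.map_pair_eq_self hS h hX
  · rw [Finset.pair_comm] at hX ⊢
    exact hf.map_pair_eq_self hS h hX
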